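/- For smooth periodic functions y and w = J^δ y, ∫ w · w_xxxx / (1 + w_x²)² dx = ∫ w_xx² / (1 + w_x²)² dx - 4 ∫ w_x² w_xx² / (1 + w_x²)³ dx + 4 ∫ w w_x w_xx w_xxx / (1 + w_x²)³ dx. -/

import Mathlib

open Real

section Aux

variable (w : ℝ → ℝ)

private lemma aux_contDiff_iter (hw : ContDiff ℝ (⊤ : ℕ∞) w) (n : ℕ) :
    ContDiff ℝ (⊤ : ℕ∞) (iteratedDeriv n w) := by
  rw [show iteratedDeriv n w = deriv^[n] w from iteratedDeriv_eq_iterate]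
  exact ContDiff.iterate_deriv n (hw.of_le (by simp))

private lemma aux_hasDerivAt_iter (hw : ContDiff ℝ (⊤ : ℕ∞) w) (n : ℕ) (x : ℝ) :
    HasDerivAt (iteratedDeriv n w) (iteratedDeriv (n + 1) w x) x := by
  rw [iteratedDeriv_succ]
  exact ((aux_contDiff_iter w hw n).differentiable (by simp) x).hasDerivAt

private lemma aux_periodic_deriv {f : ℝ → ℝ} {c : ℝ} (hf : Function.Periodic f c) :
    Function.Periodic (deriv f) c := by
  intro x
  have : (fun y => f (y + c)) = f := funext fun y => hf y
  calc deriv f (x + c) = deriv (fun y => f (y + c)) x := (deriv_comp_add_const f c x).symm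
    _ = deriv f x := by rw [this]

private lemma aux_periodic_iter {c : ℝ} (hf : Function.Periodic w c) (n : ℕ) :
    Function.Periodic (iteratedDeriv n w) c := by
  induction n with
  | zero => simpa using hf
  | succ n ih => rw [iteratedDeriv_succ]; exact aux_periodic_deriv ih

end Aux

/-- Integration by parts identity on the torus for the principal fourth-order
term of the mollified flame-front equation, for a smooth `2π`-periodic `w`
(such as `w = J^δ y`). -/
theorem fourth_order_ibp (w : ℝ → ℝ) (hw : ContDiff ℝ (⊤ : ℕ∞) w)
    (hper : Function.Periodic w (2 * π)) :
    ∫ x in (0 : ℝ)..(2 * π),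
        w x * iteratedDeriv 4 w x / (1 + (deriv w x) ^ 2) ^ 2
      = (∫ x in (0 : ℝ)..(2 * π),
          (iteratedDeriv 2 w x) ^ 2 / (1 + (deriv w x) ^ 2) ^ 2)
        - 4 * (∫ x in (0 : ℝ)..(2 * π),
            (deriv w x) ^ 2 * (iteratedDeriv 2 w x) ^ 2 /
              (1 + (deriv w x) ^ 2) ^ 3)
        + 4 * (∫ x in (0 : ℝ)..(2 * π),
            w x * deriv w x * iteratedDeriv 2 w x * iteratedDeriv 3 w x /
              (1 + (deriv w x) ^ 2) ^ 3) := by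
  set d1 : ℝ → ℝ := fun x => iteratedDeriv 1 w x with hd1
  have hderiv_eq : deriv w = iteratedDeriv 1 w := by
    funext x; rw [iteratedDeriv_one]
  -- continuity facts
  have hc : ∀ n, Continuous (iteratedDeriv n w) :=
    fun n => (aux_contDiff_iter w hw n).continuous
  have hq : ∀ x : ℝ, (0:ℝ) < 1 + (iteratedDeriv 1 w x) ^ 2 := by
    intro x; positivity
  -- G and its derivative
  set q : ℝ → ℝ := fun x => 1 + (iteratedDeriv 1 w x) ^ 2 with hqdef
  set G : ℝ → ℝ := fun x =>
      w x * iteratedDeriv 3 w x / (q x) ^ 2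
      - iteratedDeriv 1 w x * iteratedDeriv 2 w x / (q x) ^ 2 with hG
  set E : ℝ → ℝ := fun x =>
      w x * iteratedDeriv 4 w x / (q x) ^ 2
      - (iteratedDeriv 2 w x) ^ 2 / (q x) ^ 2
      + 4 * ((iteratedDeriv 1 w x) ^ 2 * (iteratedDeriv 2 w x) ^ 2 / (q x) ^ 3)
      - 4 * (w x * iteratedDeriv 1 w x * iteratedDeriv 2 w x * iteratedDeriv 3 w x
          / (q x) ^ 3) with hE
  have hG' : ∀ x, HasDerivAt G (E x) x := by
    intro x
    have h0 : HasDerivAt w (iteratedDeriv 1 w x) x := by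
      simpa using aux_hasDerivAt_iter w hw 0 x
    have h1 := aux_hasDerivAt_iter w hw 1 x
    have h2 := aux_hasDerivAt_iter w hw 2 x
    have h3 := aux_hasDerivAt_iter w hw 3 x
    have hqx : q x ≠ 0 := ne_of_gt (hq x)
    have hq2 : (q x) ^ 2 ≠ 0 := pow_ne_zero _ hqx
    have hqd : HasDerivAt (fun y => (q y) ^ 2)
        (2 * (q x) ^ 1 * (2 * iteratedDeriv 1 w x * iteratedDeriv 2 w x)) x := by
      have : HasDerivAt q (2 * iteratedDeriv 1 w x * iteratedDeriv 2 w x) x := by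
        have := ((h1.pow 2).const_add 1)
        simpa [hqdef, mul_comm, mul_assoc] using this
      exact this.pow 2
    have hA : HasDerivAt (fun y => w y * iteratedDeriv 3 w y / (q y) ^ 2)
        (((iteratedDeriv 1 w x * iteratedDeriv 3 w x + w x * iteratedDeriv 4 w x) * (q x) ^ 2
          - w x * iteratedDeriv 3 w x *
            (2 * (q x) ^ 1 * (2 * iteratedDeriv 1 w x * iteratedDeriv 2 w x))) / ((q x) ^ 2) ^ 2)
        x := (h0.mul h3).div hqd hq2
    have hB : HasDerivAt (fun y => iteratedDeriv 1 w y * iteratedDeriv 2 w y / (q y) ^ 2)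
        (((iteratedDeriv 2 w x * iteratedDeriv 2 w x + iteratedDeriv 1 w x * iteratedDeriv 3 w x)
            * (q x) ^ 2
          - iteratedDeriv 1 w x * iteratedDeriv 2 w x *
            (2 * (q x) ^ 1 * (2 * iteratedDeriv 1 w x * iteratedDeriv 2 w x))) / ((q x) ^ 2) ^ 2)
        x := (h1.mul h2).div hqd hq2
    have := hA.sub hB
    refine this.congr_deriv ?_
    rw [hE]
    field_simp
    ring
  -- the integral of E over a period is zero
  have hGper : G (2 * π) = G 0 := by
    have hw1 := aux_periodic_iter w hper 1 0
    have hw2 := aux_periodic_iter w hper 2 0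
    have hw3 := aux_periodic_iter w hper 3 0
    have hw0 := hper 0
    simp only [hG, hqdef, zero_add] at *
    rw [hw0, hw1, hw2, hw3]
  have hqc : Continuous q := by
    exact (continuous_const.add ((hc 1).pow 2))
  have hqne : ∀ x : ℝ, (q x) ≠ 0 := fun x => ne_of_gt (hq x)
  have hEcont : Continuous E := by
    have hwc : Continuous w := hw.continuous
    rw [hE]
    exact ((((hwc.mul (hc 4)).div (hqc.pow 2) fun x => pow_ne_zero _ (hqne x)).sub
        (((hc 2).pow 2).div (hqc.pow 2) fun x => pow_ne_zero _ (hqne x))).add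
        (continuous_const.mul ((((hc 1).pow 2).mul ((hc 2).pow 2)).div (hqc.pow 3)
          fun x => pow_ne_zero _ (hqne x)))).sub
        (continuous_const.mul ((((hwc.mul (hc 1)).mul (hc 2)).mul (hc 3)).div (hqc.pow 3)
          fun x => pow_ne_zero _ (hqne x)))
  have hwc : Continuous w := hw.continuous
  have hint : ∫ x in (0:ℝ)..(2*π), E x = 0 := by
    rw [intervalIntegral.integral_eq_sub_of_hasDerivAt
        (fun x _ => hG' x) (hEcont.intervalIntegrable _ _), hGper, sub_self]
  -- now split E's integral into the four pieces
  have hI1 : IntervalIntegrable (fun x => w x * iteratedDeriv 4 w x / (q x) ^ 2)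
      MeasureTheory.volume 0 (2*π) :=
    ((hwc.mul (hc 4)).div (hqc.pow 2) fun x => pow_ne_zero _ (hqne x)).intervalIntegrable _ _
  have hI2 : IntervalIntegrable (fun x => (iteratedDeriv 2 w x) ^ 2 / (q x) ^ 2)
      MeasureTheory.volume 0 (2*π) :=
    (((hc 2).pow 2).div (hqc.pow 2) fun x => pow_ne_zero _ (hqne x)).intervalIntegrable _ _
  have hI3 : IntervalIntegrable
      (fun x => (iteratedDeriv 1 w x) ^ 2 * (iteratedDeriv 2 w x) ^ 2 / (q x) ^ 3)
      MeasureTheory.volume 0 (2*π) :=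
    ((((hc 1).pow 2).mul ((hc 2).pow 2)).div (hqc.pow 3)
      fun x => pow_ne_zero _ (hqne x)).intervalIntegrable _ _
  have hI4 : IntervalIntegrable
      (fun x => w x * iteratedDeriv 1 w x * iteratedDeriv 2 w x * iteratedDeriv 3 w x / (q x) ^ 3)
      MeasureTheory.volume 0 (2*π) :=
    ((((hwc.mul (hc 1)).mul (hc 2)).mul (hc 3)).div (hqc.pow 3)
      fun x => pow_ne_zero _ (hqne x)).intervalIntegrable _ _
  have hsplit : ∫ x in (0:ℝ)..(2*π), E x
      = (∫ x in (0:ℝ)..(2*π), w x * iteratedDeriv 4 w x / (q x) ^ 2)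
        - (∫ x in (0:ℝ)..(2*π), (iteratedDeriv 2 w x) ^ 2 / (q x) ^ 2)
        + 4 * (∫ x in (0:ℝ)..(2*π),
            (iteratedDeriv 1 w x) ^ 2 * (iteratedDeriv 2 w x) ^ 2 / (q x) ^ 3)
        - 4 * (∫ x in (0:ℝ)..(2*π),
            w x * iteratedDeriv 1 w x * iteratedDeriv 2 w x * iteratedDeriv 3 w x / (q x) ^ 3) := by
    rw [hE]
    rw [intervalIntegral.integral_sub (((hI1.sub hI2).add (hI3.const_mul 4))) (hI4.const_mul 4),
        intervalIntegral.integral_add (hI1.sub hI2) (hI3.const_mul 4),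
        intervalIntegral.integral_sub hI1 hI2,
        intervalIntegral.integral_const_mul, intervalIntegral.integral_const_mul]
  rw [hderiv_eq]
  have := hsplit.symm.trans hint
  linarith [this]
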